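/- arXiv:1903.00915 — 2 statements merged into one kernel-verified Lean document; each statement's English description precedes it below -/
import Mathlib

section
/- Let W ∈ B(Y,X) be nonzero and let A ∈ B(X,Y) be Wg-Drazin invertible. Then WA ∈ B(X) is generalized Drazin invertible, W·A^{⊗,W} = (WA)^⊗ (the weak group inverse of WA), and A^{⊗,W} = A((WA)^⊗)². Moreover, for B ∈ B(X,Y), one has A^{⊗,W} = B if and only if (WA)^⊗ = WB and B = A((WA)^⊗)². -/
open ContinuousLinearMap

variable {X Y : Type*}
  [NormedAddCommGroup X] [InnerProductSpace ℂ X] [CompleteSpace X]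
  [NormedAddCommGroup Y] [InnerProductSpace ℂ Y] [CompleteSpace Y]

/-- An operator is quasinilpotent if its spectrum equals `{0}`. -/
def IsQuasinilpotent (T : X →L[ℂ] X) : Prop := spectrum ℂ T = {0}

/-- `B` is the generalized Drazin inverse of `A`. -/
def IsGDrazinInv (A B : X →L[ℂ] X) : Prop :=
  A * B = B * A ∧ B * A * B = B ∧ IsQuasinilpotent (A - A * A * B)

/-- `B` is the Wg-Drazin inverse of `A` (relative to the weight `W`); quasinilpotence of
`A - AWBWA ∈ B(X,Y)` is taken relative to `W`, i.e. `W(A - AWBWA)` is quasinilpotent. -/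
def IsWgDrazinInv (W : Y →L[ℂ] X) (A B : X →L[ℂ] Y) : Prop :=
  A ∘L W ∘L B = B ∘L W ∘L A ∧
  B ∘L W ∘L A ∘L W ∘L B = B ∧
  IsQuasinilpotent (W ∘L (A - A ∘L W ∘L B ∘L W ∘L A))

/-- `P` is the orthogonal projection of the space onto the subspace `S`. -/
def IsOrthoProjOnto (P : X →L[ℂ] X) (S : Submodule ℂ X) : Prop :=
  P * P = P ∧ ContinuousLinearMap.adjoint P = P ∧ LinearMap.range (P : X →ₗ[ℂ] X) = S

/-- `P` is the idempotent with range `L` and kernel `M` (i.e. `P = P_{L,M}`). -/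
def IsIdempotentOnAlong (P : X →L[ℂ] X) (L M : Submodule ℂ X) : Prop :=
  P * P = P ∧ LinearMap.range (P : X →ₗ[ℂ] X) = L ∧ LinearMap.ker (P : X →ₗ[ℂ] X) = M

/-- Given the generalized Drazin inverse `Ad` of `A`, `B` is the core-EP inverse of `A`:
`AB` is the orthogonal projection onto `R(A^d)` and `R(B) ⊆ R(A^d)`. -/
def IsCoreEPInv (A Ad B : X →L[ℂ] X) : Prop :=
  IsOrthoProjOnto (A * B) (LinearMap.range (Ad : X →ₗ[ℂ] X)) ∧
    LinearMap.range (B : X →ₗ[ℂ] X) ≤ LinearMap.range (Ad : X →ₗ[ℂ] X)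

/-- Given the generalized Drazin inverses `WAd` of `WA` and `AWd` of `AW`, `B` is the
weighted core-EP inverse of `A`: `WAWB` is the orthogonal projection onto `R((WA)^d)`
and `R(B) ⊆ R((AW)^d)`. -/
def IsWCoreEPInv (W : Y →L[ℂ] X) (A : X →L[ℂ] Y) (WAd : X →L[ℂ] X) (AWd : Y →L[ℂ] Y)
    (B : X →L[ℂ] Y) : Prop :=
  IsOrthoProjOnto (W ∘L A ∘L W ∘L B) (LinearMap.range (WAd : X →ₗ[ℂ] X)) ∧
  LinearMap.range (B : X →ₗ[ℂ] Y) ≤ LinearMap.range (AWd : Y →ₗ[ℂ] Y)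

/-- `B` is the group inverse of `A`. -/
def IsGroupInv (A B : X →L[ℂ] X) : Prop :=
  A * B = B * A ∧ B * A * B = B ∧ A * B * A = A

/-- `S` is the Moore-Penrose inverse of `T`. -/
def IsMPInv (T : Y →L[ℂ] X) (S : X →L[ℂ] Y) : Prop :=
  T ∘L S ∘L T = T ∧ S ∘L T ∘L S = S ∧
  ContinuousLinearMap.adjoint (T ∘L S) = T ∘L S ∧
  ContinuousLinearMap.adjoint (S ∘L T) = S ∘L T

/-- `C` is the core inverse of `T`: `TC` is the orthogonal projection onto `R(T)`
and `R(C) ⊆ R(T)`. -/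
def IsCoreInv (T C : X →L[ℂ] X) : Prop :=
  IsOrthoProjOnto (T * C) (LinearMap.range (T : X →ₗ[ℂ] X)) ∧
    LinearMap.range (C : X →ₗ[ℂ] X) ≤ LinearMap.range (T : X →ₗ[ℂ] X)



open Filter Topology in
open scoped ENNReal NNReal in
private lemma quasinil_sandwich (u : X →L[ℂ] X) (hu : IsQuasinilpotent u)
    (s : Y →L[ℂ] Y) (L : Y →L[ℂ] X) (D : Y →L[ℂ] X)
    (hD : ∀ n : ℕ, D = (u ^ (n + 1)) ∘L (L ∘L (s ^ (n + 1)))) : D = 0 := by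
  have hrad : spectralRadius ℂ u = 0 := by
    unfold spectralRadius
    rw [show spectrum ℂ u = {0} from hu]
    simp
  have hlim := spectrum.pow_nnnorm_pow_one_div_tendsto_nhds_spectralRadius u
  rw [hrad] at hlim
  set c : ℝ≥0∞ := (‖s‖₊ : ℝ≥0∞) + 1 with hc
  have hc0 : c ≠ 0 := by simp [hc]
  have hcT : c ≠ ⊤ := by simp [hc]
  have hε : (0 : ℝ≥0∞) < 2⁻¹ * c⁻¹ := by
    apply ENNReal.mul_pos
    · norm_num
    · exact ENNReal.inv_ne_zero.mpr hcT
  have hev : ∀ᶠ n : ℕ in atTop, (‖u ^ n‖₊ : ℝ≥0∞) ^ (1 / (n : ℝ)) < 2⁻¹ * c⁻¹ :=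
    hlim.eventually_lt_const hε
  have key : ∀ᶠ n : ℕ in atTop, (‖D‖₊ : ℝ≥0∞) ≤ (2⁻¹ : ℝ≥0∞) ^ n * ‖L‖₊ := by
    filter_upwards [hev, eventually_ge_atTop 1] with n hn hn1
    have hn0 : (n : ℝ) ≠ 0 := Nat.cast_ne_zero.mpr (by omega)
    have hun : (‖u ^ n‖₊ : ℝ≥0∞) ≤ (2⁻¹ * c⁻¹) ^ n := by
      have hx : ((‖u ^ n‖₊ : ℝ≥0∞) ^ (1 / (n : ℝ))) ^ (n : ℝ) ≤ (2⁻¹ * c⁻¹) ^ (n : ℝ) :=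
        ENNReal.rpow_le_rpow hn.le (by positivity)
      rwa [← ENNReal.rpow_mul, one_div, inv_mul_cancel₀ hn0, ENNReal.rpow_one,
        ENNReal.rpow_natCast] at hx
    obtain ⟨m, rfl⟩ : ∃ m, n = m + 1 := ⟨n - 1, by omega⟩
    have hb : ‖D‖₊ ≤ ‖u ^ (m + 1)‖₊ * (‖L‖₊ * ‖s ^ (m + 1)‖₊) := by
      rw [hD m]
      calc ‖(u ^ (m + 1)) ∘L (L ∘L (s ^ (m + 1)))‖₊
          ≤ ‖u ^ (m + 1)‖₊ * ‖L ∘L (s ^ (m + 1))‖₊ :=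
            ContinuousLinearMap.opNNNorm_comp_le _ _
        _ ≤ ‖u ^ (m + 1)‖₊ * (‖L‖₊ * ‖s ^ (m + 1)‖₊) := by
            gcongr
            exact ContinuousLinearMap.opNNNorm_comp_le _ _
    have hs1 : (‖s ^ (m + 1)‖₊ : ℝ≥0∞) ≤ c ^ (m + 1) := by
      calc (‖s ^ (m + 1)‖₊ : ℝ≥0∞) ≤ ((‖s‖₊ : ℝ≥0∞)) ^ (m + 1) := by
            exact_mod_cast nnnorm_pow_le' s (Nat.succ_pos m)
        _ ≤ c ^ (m + 1) := by
            gcongr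
            exact le_self_add
    calc (‖D‖₊ : ℝ≥0∞)
        ≤ (‖u ^ (m + 1)‖₊ : ℝ≥0∞) * ((‖L‖₊ : ℝ≥0∞) * (‖s ^ (m + 1)‖₊ : ℝ≥0∞)) := by
          exact_mod_cast hb
      _ ≤ (2⁻¹ * c⁻¹) ^ (m + 1) * ((‖L‖₊ : ℝ≥0∞) * c ^ (m + 1)) := by gcongr
      _ = (2⁻¹ : ℝ≥0∞) ^ (m + 1) * ((c⁻¹) ^ (m + 1) * c ^ (m + 1)) * ‖L‖₊ := by ring
      _ = (2⁻¹ : ℝ≥0∞) ^ (m + 1) * ‖L‖₊ := by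
          rw [← mul_pow, ENNReal.inv_mul_cancel hc0 hcT, one_pow, mul_one]
  have h0 : Tendsto (fun n : ℕ => (2⁻¹ : ℝ≥0∞) ^ n * ‖L‖₊) atTop (𝓝 0) := by
    have h1 := ENNReal.tendsto_pow_atTop_nhds_zero_of_lt_one
      (by norm_num : (2⁻¹ : ℝ≥0∞) < 1)
    have h2 := ENNReal.Tendsto.mul_const h1
      (Or.inr (by simp : ((‖L‖₊ : ℝ≥0∞)) ≠ ⊤))
    simpa using h2
  have hD0 : (‖D‖₊ : ℝ≥0∞) ≤ 0 := ge_of_tendsto h0 key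
  simpa using hD0

private lemma orthoProj_unique {P Q : X →L[ℂ] X} {S : Submodule ℂ X}
    (hP : IsOrthoProjOnto P S) (hQ : IsOrthoProjOnto Q S) : P = Q := by
  obtain ⟨hPi, hPa, hPr⟩ := hP
  obtain ⟨hQi, hQa, hQr⟩ := hQ
  have hfix : ∀ R : X →L[ℂ] X, R * R = R → LinearMap.range (R : X →ₗ[ℂ] X) = S → ∀ s ∈ S, R s = s := by
    intro R hR hRr s hs
    rw [← hRr] at hs
    obtain ⟨y, rfl⟩ := hs
    have := ContinuousLinearMap.ext_iff.mp hR y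
    simpa [ContinuousLinearMap.mul_apply] using this
  have hinner : ∀ R : X →L[ℂ] X, R * R = R → ContinuousLinearMap.adjoint R = R →
      LinearMap.range (R : X →ₗ[ℂ] X) = S → ∀ (x : X), ∀ s ∈ S, (inner ℂ (R x) s : ℂ) = inner ℂ x s := by
    intro R hR hRa hRr x s hs
    have h1 : (inner ℂ ((ContinuousLinearMap.adjoint R) x) s : ℂ) = inner ℂ x (R s) :=
      ContinuousLinearMap.adjoint_inner_left R s x
    rw [hRa] at h1
    rw [h1, hfix R hR hRr s hs]
  ext x
  have hmem : P x - Q x ∈ S :=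
    Submodule.sub_mem S (hPr ▸ LinearMap.mem_range_self (P : X →ₗ[ℂ] X) x) (hQr ▸ LinearMap.mem_range_self (Q : X →ₗ[ℂ] X) x)
  have hz : (inner ℂ (P x - Q x) (P x - Q x) : ℂ) = 0 := by
    rw [inner_sub_left, hinner P hPi hPa hPr x _ hmem, hinner Q hQi hQa hQr x _ hmem, sub_self]
  exact sub_eq_zero.mp (inner_self_eq_zero.mp hz)


theorem stmt15
    (W : Y →L[ℂ] X) (hW : W ≠ 0)
    (A Adw : X →L[ℂ] Y) (hAdw : IsWgDrazinInv W A Adw)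
    (WAd : X →L[ℂ] X) (hWAd : IsGDrazinInv (W ∘L A) WAd)
    (AWd : Y →L[ℂ] Y) (hAWd : IsGDrazinInv (A ∘L W) AWd)
    (Ace : X →L[ℂ] Y) (hAce : IsWCoreEPInv W A WAd AWd Ace)
    (Aot : X →L[ℂ] Y) (hAot : Aot = Ace ∘L W ∘L Ace ∘L W ∘L A)
    (WAce : X →L[ℂ] X) (hWAce : IsCoreEPInv (W ∘L A) WAd WAce)
    (WAot : X →L[ℂ] X) (hWAot : WAot = WAce * WAce * (W ∘L A)) :
    (∃ D : X →L[ℂ] X, IsGDrazinInv (W ∘L A) D) ∧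
    W ∘L Aot = WAot ∧
    Aot = A ∘L (WAot * WAot) ∧
    ∀ B : X →L[ℂ] Y, Aot = B ↔ (WAot = W ∘L B ∧ B = A ∘L (WAot * WAot)) := by
  obtain ⟨hWAd1, hWAd2, hWAd3⟩ := hWAd
  obtain ⟨hAWd1, hAWd2, hAWd3⟩ := hAWd
  obtain ⟨hP1, hr1⟩ := hAce
  obtain ⟨hP2, hr2⟩ := hWAce
  have hWAd2' : WAd * ((W ∘L A) * WAd) = WAd := by simpa only [mul_assoc] using hWAd2
  have hAWd2' : AWd * ((A ∘L W) * AWd) = AWd := by simpa only [mul_assoc] using hAWd2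
  -- idempotents p = a·WAd, q = b·AWd
  have hpp : ((W ∘L A) * WAd) * ((W ∘L A) * WAd) = (W ∘L A) * WAd := by
    calc ((W ∘L A) * WAd) * ((W ∘L A) * WAd)
        = (W ∘L A) * (WAd * ((W ∘L A) * WAd)) := by simp only [mul_assoc]
      _ = (W ∘L A) * WAd := by rw [hWAd2']
  have hqq : ((A ∘L W) * AWd) * ((A ∘L W) * AWd) = (A ∘L W) * AWd := by
    calc ((A ∘L W) * AWd) * ((A ∘L W) * AWd)
        = (A ∘L W) * (AWd * ((A ∘L W) * AWd)) := by simp only [mul_assoc]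
      _ = (A ∘L W) * AWd := by rw [hAWd2']
  have hpWAd : ((W ∘L A) * WAd) * WAd = WAd := by rw [hWAd1]; exact hWAd2
  have hqAWd : ((A ∘L W) * AWd) * AWd = AWd := by rw [hAWd1]; exact hAWd2
  have hap : (W ∘L A) * ((W ∘L A) * WAd) = ((W ∘L A) * WAd) * (W ∘L A) := by
    rw [hWAd1, ← mul_assoc, hWAd1]
  have hbq : (A ∘L W) * ((A ∘L W) * AWd) = ((A ∘L W) * AWd) * (A ∘L W) := by
    rw [hAWd1, ← mul_assoc, hAWd1]
  have hee : (1 - (W ∘L A) * WAd) * (1 - (W ∘L A) * WAd) = 1 - (W ∘L A) * WAd := by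
    simp only [sub_mul, mul_sub, one_mul, mul_one, hpp, sub_self, sub_zero]
  have hff : (1 - (A ∘L W) * AWd) * (1 - (A ∘L W) * AWd) = 1 - (A ∘L W) * AWd := by
    simp only [sub_mul, mul_sub, one_mul, mul_one, hqq, sub_self, sub_zero]
  have hea : (1 - (W ∘L A) * WAd) * (W ∘L A) = (W ∘L A) * (1 - (W ∘L A) * WAd) := by
    rw [sub_mul, mul_sub, one_mul, mul_one, hap]
  have hfb : (1 - (A ∘L W) * AWd) * (A ∘L W) = (A ∘L W) * (1 - (A ∘L W) * AWd) := by
    rw [sub_mul, mul_sub, one_mul, mul_one, hbq]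
  have hu : IsQuasinilpotent ((W ∘L A) * (1 - (W ∘L A) * WAd)) := by
    have h : W ∘L A - (W ∘L A) * (W ∘L A) * WAd = (W ∘L A) * (1 - (W ∘L A) * WAd) := by
      rw [mul_sub, mul_one, ← mul_assoc]
    rwa [h] at hWAd3
  have hv : IsQuasinilpotent ((A ∘L W) * (1 - (A ∘L W) * AWd)) := by
    have h : A ∘L W - (A ∘L W) * (A ∘L W) * AWd = (A ∘L W) * (1 - (A ∘L W) * AWd) := by
      rw [mul_sub, mul_one, ← mul_assoc]
    rwa [h] at hAWd3
  have hupow : ∀ n : ℕ, ((W ∘L A) * (1 - (W ∘L A) * WAd)) ^ (n + 1)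
      = (1 - (W ∘L A) * WAd) * (W ∘L A) ^ (n + 1) := by
    intro n
    have hcab : Commute (W ∘L A) (1 - (W ∘L A) * WAd) := hea.symm
    rw [hcab.mul_pow, IsIdempotentElem.pow_succ_eq n hee]
    exact (hcab.pow_left (n + 1)).eq
  have hvpow : ∀ n : ℕ, ((A ∘L W) * (1 - (A ∘L W) * AWd)) ^ (n + 1)
      = (1 - (A ∘L W) * AWd) * (A ∘L W) ^ (n + 1) := by
    intro n
    have hcab : Commute (A ∘L W) (1 - (A ∘L W) * AWd) := hfb.symm
    rw [hcab.mul_pow, IsIdempotentElem.pow_succ_eq n hff]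
    exact (hcab.pow_left (n + 1)).eq
  -- intertwining of powers
  have hWb : ∀ n : ℕ, ∀ y : Y, W (((A ∘L W) ^ n) y) = ((W ∘L A) ^ n) (W y) := by
    intro n
    induction n with
    | zero => intro y; simp
    | succ n ih =>
      intro y
      rw [pow_succ', pow_succ']
      simp only [ContinuousLinearMap.mul_apply, ContinuousLinearMap.comp_apply]
      rw [ih y]
  have hAa : ∀ n : ℕ, ∀ x : X, A (((W ∘L A) ^ n) x) = ((A ∘L W) ^ n) (A x) := by
    intro n
    induction n with
    | zero => intro x; simp
    | succ n ih =>
      intro x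
      rw [pow_succ', pow_succ']
      simp only [ContinuousLinearMap.mul_apply, ContinuousLinearMap.comp_apply]
      rw [ih x]
  -- the two sandwich-zero facts
  have hZ1 : (1 - (W ∘L A) * WAd) ∘L (W ∘L ((A ∘L W) * AWd)) = 0 := by
    apply quasinil_sandwich _ hu AWd W
    intro n
    have hbc : Commute (A ∘L W) AWd := hAWd1
    have hq_eq : (A ∘L W) * AWd = ((A ∘L W) ^ (n + 1)) * (AWd ^ (n + 1)) := by
      rw [← hbc.mul_pow]
      exact (IsIdempotentElem.pow_succ_eq n hqq).symm
    conv_lhs => rw [hq_eq]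
    rw [hupow n]
    ext y
    simp only [ContinuousLinearMap.comp_apply, ContinuousLinearMap.mul_apply]
    rw [hWb (n + 1) ((AWd ^ (n + 1)) y)]
  have hZ2 : (1 - (A ∘L W) * AWd) ∘L (A ∘L ((W ∘L A) * WAd)) = 0 := by
    apply quasinil_sandwich _ hv WAd A
    intro n
    have hbc : Commute (W ∘L A) WAd := hWAd1
    have hp_eq : (W ∘L A) * WAd = ((W ∘L A) ^ (n + 1)) * (WAd ^ (n + 1)) := by
      rw [← hbc.mul_pow]
      exact (IsIdempotentElem.pow_succ_eq n hpp).symm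
    conv_lhs => rw [hp_eq]
    rw [hvpow n]
    ext x
    simp only [ContinuousLinearMap.comp_apply, ContinuousLinearMap.mul_apply]
    rw [hAa (n + 1) ((WAd ^ (n + 1)) x)]
  have hproj1 : ((W ∘L A) * WAd) ∘L (W ∘L ((A ∘L W) * AWd)) = W ∘L ((A ∘L W) * AWd) := by
    have h := hZ1
    rw [ContinuousLinearMap.sub_comp, ContinuousLinearMap.one_def,
      ContinuousLinearMap.id_comp] at h
    exact (sub_eq_zero.mp h).symm
  have hproj2 : ((A ∘L W) * AWd) ∘L (A ∘L ((W ∘L A) * WAd)) = A ∘L ((W ∘L A) * WAd) := by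
    have h := hZ2
    rw [ContinuousLinearMap.sub_comp, ContinuousLinearMap.one_def,
      ContinuousLinearMap.id_comp] at h
    exact (sub_eq_zero.mp h).symm
  -- range facts
  have hpz : ∀ z, z ∈ LinearMap.range (WAd : X →ₗ[ℂ] X) → ((W ∘L A) * WAd) z = z := by
    rintro z ⟨y, rfl⟩
    have := ContinuousLinearMap.ext_iff.mp hpWAd y
    simpa [ContinuousLinearMap.mul_apply] using this
  have hqz : ∀ z, z ∈ LinearMap.range (AWd : Y →ₗ[ℂ] Y) → ((A ∘L W) * AWd) z = z := by
    rintro z ⟨y, rfl⟩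
    have := ContinuousLinearMap.ext_iff.mp hqAWd y
    simpa [ContinuousLinearMap.mul_apply] using this
  have hrangep : ∀ x, ((W ∘L A) * WAd) x ∈ LinearMap.range (WAd : X →ₗ[ℂ] X) := by
    intro x
    rw [hWAd1]
    exact ⟨(W ∘L A) x, rfl⟩
  have hrangeq : ∀ y, ((A ∘L W) * AWd) y ∈ LinearMap.range (AWd : Y →ₗ[ℂ] Y) := by
    intro y
    rw [hAWd1]
    exact ⟨(A ∘L W) y, rfl⟩
  -- equality of the two orthogonal projections
  have hPeq : (W ∘L A) * WAce = W ∘L A ∘L W ∘L Ace := orthoProj_unique hP2 hP1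
  have hPfix : ∀ z, z ∈ LinearMap.range (WAd : X →ₗ[ℂ] X) → ((W ∘L A) * WAce) z = z := by
    intro z hz
    rw [← hP2.2.2] at hz
    obtain ⟨y, rfl⟩ := hz
    have := ContinuousLinearMap.ext_iff.mp hP2.1 y
    simpa [ContinuousLinearMap.mul_apply] using this
  have hS2' : ∀ x, ((W ∘L A) * WAce) (WAce x) = WAce x := fun x => hPfix _ (hr2 ⟨x, rfl⟩)
  -- W ∘L Ace = WAce
  have hS4 : W ∘L Ace = WAce := by
    ext x
    simp only [ContinuousLinearMap.comp_apply]
    have hz1 : W (Ace x) ∈ LinearMap.range (WAd : X →ₗ[ℂ] X) := by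
      obtain ⟨y, hy⟩ := hr1 (⟨x, rfl⟩ : Ace x ∈ LinearMap.range (Ace : X →ₗ[ℂ] Y))
      have hq_awd : ((A ∘L W) * AWd) (AWd y) = AWd y := hqz _ ⟨y, rfl⟩
      have e2 := ContinuousLinearMap.ext_iff.mp hproj1 (AWd y)
      simp only [ContinuousLinearMap.comp_apply] at e2
      rw [hq_awd] at e2
      rw [ContinuousLinearMap.coe_coe] at hy
      rw [← hy, ← e2]
      exact hrangep _
    have hz2 : WAce x ∈ LinearMap.range (WAd : X →ₗ[ℂ] X) := hr2 ⟨x, rfl⟩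
    have heq : (W ∘L A) (W (Ace x)) = (W ∘L A) (WAce x) := by
      have h := (ContinuousLinearMap.ext_iff.mp hPeq x).symm
      simp only [ContinuousLinearMap.mul_apply, ContinuousLinearMap.comp_apply] at h ⊢
      exact h
    obtain ⟨t, ht⟩ := LinearMap.mem_range.mp (Submodule.sub_mem _ hz1 hz2)
    have hsub : (W ∘L A) (W (Ace x) - WAce x) = 0 := by rw [map_sub, heq, sub_self]
    have hzero : W (Ace x) - WAce x = 0 := by
      have e3 := ContinuousLinearMap.ext_iff.mp hWAd2 t
      calc W (Ace x) - WAce x = WAd t := ht.symm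
        _ = (WAd * (W ∘L A) * WAd) t := e3.symm
        _ = WAd ((W ∘L A) (WAd t)) := rfl
        _ = WAd ((W ∘L A) (W (Ace x) - WAce x)) := by rw [ContinuousLinearMap.coe_coe] at ht; rw [ht]
        _ = 0 := by rw [hsub, map_zero]
    exact sub_eq_zero.mp hzero
  -- Ace = A ∘L (WAce * WAce)
  have hPW : ((W ∘L A) * WAce) * WAce = WAce := by
    ext x
    exact hS2' x
  have hOP : (W ∘L A) * ((W ∘L A) * (WAce * WAce)) = (W ∘L A) * WAce := by
    calc (W ∘L A) * ((W ∘L A) * (WAce * WAce))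
        = (W ∘L A) * (((W ∘L A) * WAce) * WAce) := by simp only [mul_assoc]
      _ = (W ∘L A) * WAce := by rw [hPW]
  have hR : W ∘L A ∘L W ∘L (A ∘L (WAce * WAce)) = (W ∘L A) * ((W ∘L A) * (WAce * WAce)) := by
    ext x
    simp only [ContinuousLinearMap.comp_apply, ContinuousLinearMap.mul_apply]
  have step1 : AWd * ((A ∘L W) * ((A ∘L W) * AWd)) = (A ∘L W) * AWd := by
    rw [← mul_assoc, ← hAWd1, mul_assoc, hAWd2']
  have T1 : AWd * (AWd * ((A ∘L W) * ((A ∘L W) * AWd))) = AWd := by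
    rw [step1, hAWd2']
  have hS5 : Ace = A ∘L (WAce * WAce) := by
    ext x
    have hz1 : Ace x ∈ LinearMap.range (AWd : Y →ₗ[ℂ] Y) := hr1 ⟨x, rfl⟩
    have hz2 : (A ∘L (WAce * WAce)) x ∈ LinearMap.range (AWd : Y →ₗ[ℂ] Y) := by
      obtain ⟨y, hy⟩ := hr2 (⟨WAce x, rfl⟩ : WAce (WAce x) ∈ LinearMap.range (WAce : X →ₗ[ℂ] X))
      have hpfix : ((W ∘L A) * WAd) (WAd y) = WAd y := hpz _ ⟨y, rfl⟩
      have e2 := ContinuousLinearMap.ext_iff.mp hproj2 (WAd y)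
      simp only [ContinuousLinearMap.comp_apply] at e2
      rw [hpfix] at e2
      have hAx : (A ∘L (WAce * WAce)) x = A (WAd y) := by
        simp only [ContinuousLinearMap.comp_apply, ContinuousLinearMap.mul_apply]
        rw [ContinuousLinearMap.coe_coe] at hy
        rw [hy]
      rw [hAx, ← e2]
      exact hrangeq _
    have heq : W (A (W (Ace x))) = W (A (W ((A ∘L (WAce * WAce)) x))) := by
      have h1 := ContinuousLinearMap.ext_iff.mp hPeq.symm x
      have h2 := ContinuousLinearMap.ext_iff.mp (hR.trans hOP) x
      simp only [ContinuousLinearMap.comp_apply, ContinuousLinearMap.mul_apply] at h1 h2 ⊢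
      exact h1.trans h2.symm
    obtain ⟨t, ht⟩ := LinearMap.mem_range.mp (Submodule.sub_mem _ hz1 hz2)
    have hsub : W (A (W (Ace x - (A ∘L (WAce * WAce)) x))) = 0 := by
      simp only [map_sub]
      rw [heq, sub_self]
    have hzero : Ace x - (A ∘L (WAce * WAce)) x = 0 := by
      have e3 := ContinuousLinearMap.ext_iff.mp T1 t
      calc Ace x - (A ∘L (WAce * WAce)) x = AWd t := ht.symm
        _ = (AWd * (AWd * ((A ∘L W) * ((A ∘L W) * AWd)))) t := e3.symm
        _ = AWd (AWd (A (W (A (W (AWd t)))))) := rfl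
        _ = AWd (AWd (A (W (A (W (Ace x - (A ∘L (WAce * WAce)) x)))))) := by rw [ContinuousLinearMap.coe_coe] at ht; rw [ht]
        _ = 0 := by rw [hsub]; simp
    exact sub_eq_zero.mp hzero
  -- pointwise versions
  have hS4x : ∀ t, W (Ace t) = WAce t := by
    intro t
    have := ContinuousLinearMap.ext_iff.mp hS4 t
    simpa using this
  have hS5x : ∀ t, Ace t = A (WAce (WAce t)) := by
    intro t
    have := ContinuousLinearMap.ext_iff.mp hS5 t
    simpa using this
  have hfixx : ∀ t, W (A (WAce (WAce t))) = WAce t := by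
    intro t
    have := hS2' t
    simpa [ContinuousLinearMap.mul_apply] using this
  have hG2 : W ∘L Aot = WAot := by
    rw [hAot, hWAot]
    ext x
    simp only [ContinuousLinearMap.comp_apply, ContinuousLinearMap.mul_apply, hS4x]
  have hG3 : Aot = A ∘L (WAot * WAot) := by
    rw [hAot, hWAot]
    ext x
    simp only [ContinuousLinearMap.comp_apply, ContinuousLinearMap.mul_apply, hS4x, hfixx]
    rw [hS5x]
  refine ⟨⟨WAd, hWAd1, hWAd2, hWAd3⟩, hG2, hG3, ?_⟩
  intro B
  constructor
  · rintro rfl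
    exact ⟨hG2.symm, hG3⟩
  · rintro ⟨h1, h2⟩
    rw [h2, ← hG3]
end

section
/- Let W ∈ B(Y,X) be nonzero and let A ∈ B(X,Y) be Wg-Drazin invertible. Then A^{⊗,W} = (AW)^⊗ A (WA)^⊗, where (AW)^⊗ ∈ B(Y) and (WA)^⊗ ∈ B(X) are the weak group inverses of AW and WA. -/
open ContinuousLinearMap

variable {X Y : Type*}
  [NormedAddCommGroup X] [InnerProductSpace ℂ X] [CompleteSpace X]
  [NormedAddCommGroup Y] [InnerProductSpace ℂ Y] [CompleteSpace Y]

section AuxStmt16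
open Filter Topology

set_option linter.unusedSectionVars false
set_option linter.unusedVariables false
set_option maxHeartbeats 1000000

lemma qn_aux {N M : X →L[ℂ] X} (hN : IsQuasinilpotent N) (c : ℝ) (hc : 0 ≤ c)
    (h : ∀ n : ℕ, ‖M‖ ≤ c ^ (n + 1) * ‖N ^ (n + 1)‖) : M = 0 := by
  have hrad : spectralRadius ℂ N = 0 := by
    rw [IsQuasinilpotent] at hN; simp [spectralRadius, hN]
  have hg := spectrum.pow_norm_pow_one_div_tendsto_nhds_spectralRadius N
  rw [hrad] at hg
  have hreal : Tendsto (fun n : ℕ => ‖N ^ n‖ ^ (1 / (n : ℝ))) atTop (𝓝 0) := by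
    have h2 := (ENNReal.tendsto_toReal (by simp : (0 : ENNReal) ≠ ⊤)).comp hg
    simp only [Function.comp_def, ENNReal.toReal_zero] at h2
    refine h2.congr fun n => ?_
    exact ENNReal.toReal_ofReal (Real.rpow_nonneg (norm_nonneg _) _)
  have hc2 : Tendsto (fun n : ℕ => c * ‖N ^ (n + 1)‖ ^ (1 / ((n : ℝ) + 1))) atTop (𝓝 0) := by
    have h3 := (hreal.comp (tendsto_add_atTop_nat 1)).const_mul c
    simp only [Function.comp_def, mul_zero] at h3
    refine h3.congr fun n => ?_
    push_cast
    ring_nf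
  have hev : ∀ᶠ n : ℕ in atTop, c * ‖N ^ (n + 1)‖ ^ (1 / ((n : ℝ) + 1)) < 1 / 2 :=
    hc2.eventually (gt_mem_nhds (by norm_num))
  have hbound : ∀ᶠ n : ℕ in atTop, ‖M‖ ≤ (1 / 2 : ℝ) ^ (n + 1) := by
    refine hev.mono fun n hn => ?_
    have hpow : (‖N ^ (n + 1)‖ ^ (1 / ((n : ℝ) + 1))) ^ (n + 1) = ‖N ^ (n + 1)‖ := by
      rw [← Real.rpow_natCast (‖N ^ (n + 1)‖ ^ (1 / ((n : ℝ) + 1))) (n + 1),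
        ← Real.rpow_mul (norm_nonneg _)]
      push_cast
      rw [one_div_mul_cancel (by positivity : ((n : ℝ) + 1) ≠ 0), Real.rpow_one]
    have h1 : ‖M‖ ≤ (c * ‖N ^ (n + 1)‖ ^ (1 / ((n : ℝ) + 1))) ^ (n + 1) := by
      rw [mul_pow, hpow]; exact h n
    refine h1.trans ?_
    exact pow_le_pow_left₀ (by positivity) hn.le _
  have hlim : Tendsto (fun n : ℕ => (1 / 2 : ℝ) ^ (n + 1)) atTop (𝓝 0) := by
    have := tendsto_pow_atTop_nhds_zero_of_lt_one (by norm_num : (0:ℝ) ≤ 1/2) (by norm_num)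
    exact this.comp (tendsto_add_atTop_nat 1)
  have : ‖M‖ ≤ 0 := ge_of_tendsto hlim hbound
  simpa using le_antisymm this (norm_nonneg M)


section GD

variable {T B B1 B2 : X →L[ℂ] X}

lemma proj_idem (hb : B * T * B = B) : (T * B) * (T * B) = T * B := by
  rw [mul_assoc, ← mul_assoc B T B, hb]

lemma pow_mul_pow (hc : T * B = B * T) (hb : B * T * B = B) (n : ℕ) :
    T ^ (n + 1) * B ^ (n + 1) = T * B := by
  have hcomm : Commute T B := hc
  rw [← hcomm.mul_pow]
  induction n with
  | zero => simp
  | succ n ih => rw [pow_succ, ih, proj_idem hb]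

lemma pow_mul_pow' (hc : T * B = B * T) (hb : B * T * B = B) (n : ℕ) :
    B ^ (n + 1) * T ^ (n + 1) = T * B := by
  have hcomm : Commute B T := hc.symm
  rw [hcomm.pow_pow]; exact pow_mul_pow hc hb n

lemma npow_eq (hc : T * B = B * T) (hb : B * T * B = B) (n : ℕ) :
    (T - T * T * B) ^ (n + 1) = T ^ (n + 1) * (1 - T * B) := by
  have hN : T - T * T * B = T * (1 - T * B) := by noncomm_ring
  have hTD : Commute T (T * B) := by
    show T * (T * B) = (T * B) * T
    rw [mul_assoc, hc, ← mul_assoc]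
  have hcomm : Commute T (1 - T * B) := (Commute.one_right T).sub_right hTD
  rw [hN, hcomm.mul_pow]
  congr 1
  have hidem : (1 - T * B) * (1 - T * B) = 1 - T * B := by
    have hP := proj_idem (T := T) hb
    calc (1 - T*B) * (1 - T*B) = 1 - (T*B) - (T*B) + (T*B)*(T*B) := by noncomm_ring
      _ = 1 - T*B := by rw [hP]; abel
  induction n with
  | zero => simp
  | succ n ih => rw [pow_succ, ih, hidem]

theorem gdrazin_unique (h1 : IsGDrazinInv T B1) (h2 : IsGDrazinInv T B2) : B1 = B2 := by
  obtain ⟨c1, b1, q1⟩ := h1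
  obtain ⟨c2, b2, q2⟩ := h2
  have key : ∀ (C D : X →L[ℂ] X), T * C = C * T → C * T * C = C → T * D = D * T → D * T * D = D →
      IsQuasinilpotent (T - T * T * D) → (T * C) * (1 - T * D) = 0 := by
    intro C D hc hcb hd hdb hq
    refine qn_aux hq ‖C‖ (norm_nonneg _) fun n => ?_
    have heq : (T * C) * (1 - T * D) = C ^ (n+1) * (T - T*T*D) ^ (n+1) := by
      rw [npow_eq hd hdb, ← mul_assoc, pow_mul_pow' hc hcb]
    rw [heq]
    calc ‖C ^ (n+1) * (T - T*T*D) ^ (n+1)‖ ≤ ‖C ^ (n+1)‖ * ‖(T - T*T*D) ^ (n+1)‖ :=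
          norm_mul_le _ _
      _ ≤ ‖C‖ ^ (n+1) * ‖(T - T*T*D) ^ (n+1)‖ :=
          mul_le_mul_of_nonneg_right (norm_pow_le' _ (Nat.succ_pos n)) (norm_nonneg _)
  have key' : ∀ (C D : X →L[ℂ] X), T * C = C * T → C * T * C = C → T * D = D * T → D * T * D = D →
      IsQuasinilpotent (T - T * T * D) → (1 - T * D) * (T * C) = 0 := by
    intro C D hc hcb hd hdb hq
    refine qn_aux hq ‖C‖ (norm_nonneg _) fun n => ?_
    have hTD : Commute T (T * D) := by
      show T * (T * D) = (T * D) * T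
      rw [mul_assoc, hd, ← mul_assoc]
    have hcm : Commute (T ^ (n+1)) (1 - T * D) :=
      (Commute.one_right _).sub_right (hTD.pow_left _)
    have heq : (1 - T * D) * (T * C) = (T - T*T*D) ^ (n+1) * C ^ (n+1) := by
      calc (1 - T*D)*(T*C) = (1 - T*D)*(T^(n+1)*C^(n+1)) := by rw [pow_mul_pow hc hcb]
        _ = (1 - T*D)*T^(n+1)*C^(n+1) := by rw [mul_assoc]
        _ = T^(n+1)*(1 - T*D)*C^(n+1) := by rw [hcm.eq]
        _ = (T - T*T*D)^(n+1)*C^(n+1) := by rw [npow_eq hd hdb]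
    rw [heq]
    calc ‖(T - T*T*D) ^ (n+1) * C ^ (n+1)‖ ≤ ‖(T - T*T*D) ^ (n+1)‖ * ‖C ^ (n+1)‖ :=
          norm_mul_le _ _
      _ ≤ ‖(T - T*T*D) ^ (n+1)‖ * ‖C‖ ^ (n+1) :=
          mul_le_mul_of_nonneg_left (norm_pow_le' _ (Nat.succ_pos n)) (norm_nonneg _)
      _ = ‖C‖ ^ (n+1) * ‖(T - T*T*D) ^ (n+1)‖ := mul_comm _ _
  have h12 : T * B1 = T * B1 * (T * B2) := by
    have := key B1 B2 c1 b1 c2 b2 q2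
    rwa [mul_one_sub, sub_eq_zero] at this
  have h21 : T * B2 = T * B1 * (T * B2) := by
    have := key' B2 B1 c2 b2 c1 b1 q1
    rwa [one_sub_mul, sub_eq_zero] at this
  have hPP : T * B1 = T * B2 := h12.trans h21.symm
  calc B1 = B1 * (T * B1) := by rw [← mul_assoc]; exact b1.symm
    _ = B1 * (T * B2) := by rw [hPP]
    _ = (B1 * T) * B2 := by rw [mul_assoc]
    _ = (T * B1) * B2 := by rw [c1]
    _ = (T * B2) * B2 := by rw [hPP]
    _ = B2 := by rw [c2]; exact b2

end GD


lemma qn_comp_comm (hY : ∃ y : Y, y ≠ 0) {S : X →L[ℂ] Y} {T : Y →L[ℂ] X}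
    (h : IsQuasinilpotent (T ∘L S)) : IsQuasinilpotent (S ∘L T) := by
  obtain ⟨y0, hy0⟩ := hY
  haveI : Nontrivial Y := ⟨y0, 0, hy0⟩
  haveI : Nontrivial (Y →L[ℂ] Y) := ⟨1, 0, by
    intro hcon
    have : (1 : Y →L[ℂ] Y) y0 = (0 : Y →L[ℂ] Y) y0 := by rw [hcon]
    simp at this
    exact hy0 this⟩
  rw [IsQuasinilpotent] at h ⊢
  have hsub : spectrum ℂ (S ∘L T) ⊆ {0} := by
    intro z hz
    simp only [Set.mem_singleton_iff]
    by_contra hz0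
    rw [spectrum.mem_iff] at hz
    apply hz
    have hzTS : z ∉ spectrum ℂ (T ∘L S) := by
      rw [h]; simpa using hz0
    rw [spectrum.notMem_iff] at hzTS
    obtain ⟨u, hu⟩ := hzTS
    set v : X →L[ℂ] X := ↑u⁻¹ with hv
    set a : X →L[ℂ] X := algebraMap ℂ (X →L[ℂ] X) z - T ∘L S with ha
    have hav : a ∘L v = 1 := by
      rw [← ContinuousLinearMap.mul_def, ← hu]; exact u.mul_inv
    have hva : v ∘L a = 1 := by
      rw [← ContinuousLinearMap.mul_def, ← hu]; exact u.inv_mul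
    have halg : algebraMap ℂ (Y →L[ℂ] Y) z = z • 1 := Algebra.algebraMap_eq_smul_one z
    have halgX : algebraMap ℂ (X →L[ℂ] X) z = z • 1 := Algebra.algebraMap_eq_smul_one z
    set b : Y →L[ℂ] Y := z⁻¹ • ((1 : Y →L[ℂ] Y) + S ∘L v ∘L T) with hb
    -- key comp identities
    have k1 : (algebraMap ℂ (Y →L[ℂ] Y) z - S ∘L T) ∘L S = S ∘L a := by
      rw [halg, ha, halgX]
      ext x
      simp [comp_apply, sub_apply, smul_apply, map_smul, map_sub]
    have k2 : T ∘L (algebraMap ℂ (Y →L[ℂ] Y) z - S ∘L T) = a ∘L T := by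
      rw [halg, ha, halgX]
      ext x
      simp [comp_apply, sub_apply, smul_apply, map_smul, map_sub]
    have main1 : (algebraMap ℂ (Y →L[ℂ] Y) z - S ∘L T) * b = 1 := by
      rw [hb, mul_smul_comm]
      have expand : (algebraMap ℂ (Y →L[ℂ] Y) z - S ∘L T) * ((1 : Y →L[ℂ] Y) + S ∘L v ∘L T)
          = (algebraMap ℂ (Y →L[ℂ] Y) z - S ∘L T) + ((algebraMap ℂ (Y →L[ℂ] Y) z - S ∘L T) ∘L S) ∘L (v ∘L T) := by
        rw [mul_add, mul_one]
        congr 1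

      rw [expand, k1, comp_assoc]
      have hav2 : a ∘L (v ∘L T) = T := by
        rw [← comp_assoc, hav, one_def, id_comp]
      rw [hav2]
      have : algebraMap ℂ (Y →L[ℂ] Y) z - S ∘L T + S ∘L T = algebraMap ℂ (Y →L[ℂ] Y) z := by
        abel
      rw [this, halg, smul_smul, inv_mul_cancel₀ hz0, one_smul]
    have main2 : b * (algebraMap ℂ (Y →L[ℂ] Y) z - S ∘L T) = 1 := by
      rw [hb, smul_mul_assoc]
      have expand : ((1 : Y →L[ℂ] Y) + S ∘L v ∘L T) * (algebraMap ℂ (Y →L[ℂ] Y) z - S ∘L T)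
          = (algebraMap ℂ (Y →L[ℂ] Y) z - S ∘L T) + S ∘L (v ∘L (T ∘L (algebraMap ℂ (Y →L[ℂ] Y) z - S ∘L T))) := by
        rw [add_mul, one_mul]
        congr 1

      rw [expand, k2]
      have hva2 : v ∘L (a ∘L T) = T := by
        rw [← comp_assoc, hva, one_def, id_comp]
      rw [hva2]
      have : algebraMap ℂ (Y →L[ℂ] Y) z - S ∘L T + S ∘L T = algebraMap ℂ (Y →L[ℂ] Y) z := by
        abel
      rw [this, halg, smul_smul, inv_mul_cancel₀ hz0, one_smul]
    exact ⟨⟨algebraMap ℂ (Y →L[ℂ] Y) z - S ∘L T, b, main1, main2⟩, rfl⟩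
  refine Set.Subset.antisymm hsub ?_
  intro w hw
  obtain ⟨s, hs⟩ := spectrum.nonempty (S ∘L T)
  have hs0 : s = 0 := Set.mem_singleton_iff.mp (hsub hs)
  rw [Set.mem_singleton_iff] at hw
  rw [hw, ← hs0]
  exact hs


lemma pt_inj {Z : Type*} [NormedAddCommGroup Z] [NormedSpace ℂ Z] {T B : Z →L[ℂ] Z}
    (hb : B * T * B = B) {x : Z} (hx : x ∈ LinearMap.range (B : Z →ₗ[ℂ] Z)) (h0 : T x = 0) : x = 0 := by
  obtain ⟨y, rfl⟩ := hx
  have h := ContinuousLinearMap.ext_iff.mp hb y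
  simp only [mul_apply_eq_comp] at h
  change T (B y) = 0 at h0; change B y = 0
  rw [← h, h0, map_zero]

lemma idem_fix {Z : Type*} [NormedAddCommGroup Z] [NormedSpace ℂ Z] {P : Z →L[ℂ] Z}
    (hidem : P * P = P) {x : Z} (hx : x ∈ LinearMap.range (P : Z →ₗ[ℂ] Z)) : P x = x := by
  obtain ⟨y, rfl⟩ := hx
  have h := ContinuousLinearMap.ext_iff.mp hidem y
  simpa [mul_apply] using h

lemma orthProj_unique {P R : X →L[ℂ] X} {S : Submodule ℂ X}
    (hP : IsOrthoProjOnto P S) (hR : IsOrthoProjOnto R S) : P = R := by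
  obtain ⟨hP1, hP2, hP3⟩ := hP
  obtain ⟨hR1, hR2, hR3⟩ := hR
  have h1 : P * R = R := ContinuousLinearMap.ext fun x => by
    have : R x ∈ LinearMap.range (P : X →ₗ[ℂ] X) := by rw [hP3, ← hR3]; exact ⟨x, rfl⟩
    simpa [mul_apply] using idem_fix hP1 this
  have h2 : R * P = P := ContinuousLinearMap.ext fun x => by
    have : P x ∈ LinearMap.range (R : X →ₗ[ℂ] X) := by rw [hR3, ← hP3]; exact ⟨x, rfl⟩
    simpa [mul_apply] using idem_fix hR1 this
  have hadj : ContinuousLinearMap.adjoint (R ∘L P) = ContinuousLinearMap.adjoint P ∘L ContinuousLinearMap.adjoint R :=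
    ContinuousLinearMap.adjoint_comp R P
  calc P = ContinuousLinearMap.adjoint P := hP2.symm
    _ = ContinuousLinearMap.adjoint (R * P) := by rw [h2]
    _ = ContinuousLinearMap.adjoint P ∘L ContinuousLinearMap.adjoint R := hadj
    _ = P ∘L R := by rw [hP2, hR2]
    _ = R := h1



theorem stmt16
    (W : Y →L[ℂ] X) (hW : W ≠ 0)
    (A Adw : X →L[ℂ] Y) (hAdw : IsWgDrazinInv W A Adw)
    (WAd : X →L[ℂ] X) (hWAd : IsGDrazinInv (W ∘L A) WAd)
    (AWd : Y →L[ℂ] Y) (hAWd : IsGDrazinInv (A ∘L W) AWd)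
    (Ace : X →L[ℂ] Y) (hAce : IsWCoreEPInv W A WAd AWd Ace)
    (Aot : X →L[ℂ] Y) (hAot : Aot = Ace ∘L W ∘L Ace ∘L W ∘L A)
    (AWce : Y →L[ℂ] Y) (hAWce : IsCoreEPInv (A ∘L W) AWd AWce)
    (AWot : Y →L[ℂ] Y) (hAWot : AWot = AWce * AWce * (A ∘L W))
    (WAce : X →L[ℂ] X) (hWAce : IsCoreEPInv (W ∘L A) WAd WAce)
    (WAot : X →L[ℂ] X) (hWAot : WAot = WAce * WAce * (W ∘L A)) :
    Aot = AWot ∘L A ∘L WAot := by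
  obtain ⟨hWAc, hWAb, hWAq⟩ := hWAd
  obtain ⟨hAWc, hAWb, hAWq⟩ := hAWd
  obtain ⟨⟨hPidem, hPadj, hPrange⟩, hAceR⟩ := hAce
  obtain ⟨⟨hQidem, hQadj, hQrange⟩, hAWceR⟩ := hAWce
  obtain ⟨⟨hRidem, hRadj, hRrange⟩, hWAceR⟩ := hWAce
  -- nontriviality of Y
  have hY : ∃ y : Y, y ≠ 0 := by
    by_contra hcon
    push_neg at hcon
    apply hW
    ext y
    rw [hcon y]
    simp
  -- pointwise commutation facts for WAd
  have pc1 : ∀ x, W (A (WAd x)) = WAd (W (A x)) := fun x => by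
    have := ContinuousLinearMap.ext_iff.mp hWAc x
    simpa [mul_apply, comp_apply] using this
  have pb1 : ∀ x, WAd (W (A (WAd x))) = WAd x := fun x => by
    have := ContinuousLinearMap.ext_iff.mp hWAb x
    simpa [mul_apply, comp_apply] using this
  have pb1' : ∀ x, WAd (WAd (W (A x))) = WAd x := fun x => by
    rw [← pc1, pb1]
  have pc2 : ∀ y, A (W (AWd y)) = AWd (A (W y)) := fun y => by
    have := ContinuousLinearMap.ext_iff.mp hAWc y
    simpa [mul_apply, comp_apply] using this
  have pb2 : ∀ y, AWd (A (W (AWd y))) = AWd y := fun y => by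
    have := ContinuousLinearMap.ext_iff.mp hAWb y
    simpa [mul_apply, comp_apply] using this
  -- Cline-type identification of AWd
  have hG : IsGDrazinInv (A ∘L W) (A ∘L WAd ∘L WAd ∘L W) := by
    refine ⟨?_, ?_, ?_⟩
    · ext y
      simp only [mul_apply_eq_comp, comp_apply, pc1]
    · ext y
      simp only [mul_apply_eq_comp, comp_apply, pc1, pb1, pb1']
    · have hS : (A ∘L W) - (A ∘L W) * (A ∘L W) * (A ∘L WAd ∘L WAd ∘L W)
          = (A - A ∘L ((W ∘L A) * WAd)) ∘L W := by
        ext y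
        simp only [sub_apply, comp_apply, mul_apply_eq_comp, pc1, pb1, pb1']
      have hWS : W ∘L (A - A ∘L ((W ∘L A) * WAd)) = (W ∘L A) - (W ∘L A) * (W ∘L A) * WAd := by
        ext x
        simp only [sub_apply, comp_apply, mul_apply_eq_comp, map_sub]
      have hqn1 : IsQuasinilpotent (W ∘L (A - A ∘L ((W ∘L A) * WAd))) := by
        rw [hWS]; exact hWAq
      have hqn2 := qn_comp_comm hY hqn1
      rw [hS]; exact hqn2
  have hAWdG : AWd = A ∘L WAd ∘L WAd ∘L W := gdrazin_unique ⟨hAWc, hAWb, hAWq⟩ hG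
  -- bridges
  have b1 : ∀ x, A (WAd x) = AWd (A x) := fun x => by
    rw [hAWdG]
    simp only [comp_apply]
    rw [pb1']
  have b2 : ∀ y, W (AWd y) = WAd (W y) := fun y => by
    rw [hAWdG]
    simp only [comp_apply]
    rw [pc1, pb1]
  -- P = R
  have hP_R : W ∘L A ∘L W ∘L Ace = (W ∘L A) * WAce :=
    orthProj_unique ⟨hPidem, hPadj, hPrange⟩ ⟨hRidem, hRadj, hRrange⟩
  have e2L : ∀ x, W (A (WAce x)) = (W ∘L A ∘L W ∘L Ace) x := fun x => by
    rw [hP_R]; rfl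
  -- C1 : W (Ace x) = WAce x
  have e1 : ∀ x, W (Ace x) = WAce x := by
    intro x
    have hmem : W (Ace x) - WAce x ∈ LinearMap.range (WAd : X →ₗ[ℂ] X) := by
      apply Submodule.sub_mem
      · obtain ⟨w, hw⟩ := hAceR ⟨x, rfl⟩
        replace hw : AWd w = Ace x := hw
        rw [← hw, b2 w]
        exact ⟨W w, rfl⟩
      · exact hWAceR ⟨x, rfl⟩
    have h0 : (W ∘L A) (W (Ace x) - WAce x) = 0 := by
      simp only [map_sub, comp_apply]
      rw [e2L x]
      simp only [comp_apply, sub_self]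
    exact sub_eq_zero.mp (pt_inj hWAb hmem h0)
  -- e3, e5, g2, g5 : projections fix ranges
  have e3 : ∀ x, (W ∘L A ∘L W ∘L Ace) ((WAce) x) = WAce x := fun x =>
    idem_fix hPidem (by rw [hPrange]; exact hWAceR ⟨x, rfl⟩)
  have e5 : ∀ x, (W ∘L A ∘L W ∘L Ace) (WAd x) = WAd x := fun x =>
    idem_fix hPidem (by rw [hPrange]; exact ⟨x, rfl⟩)
  have g2 : ∀ y, ((A ∘L W) * AWce) (AWce y) = AWce y := fun y =>
    idem_fix hQidem (by rw [hQrange]; exact hAWceR ⟨y, rfl⟩)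
  have g5 : ∀ y, ((A ∘L W) * AWce) (AWd y) = AWd y := fun y =>
    idem_fix hQidem (by rw [hQrange]; exact ⟨y, rfl⟩)
  have g1 : ∀ y, A (W (AWce y)) = ((A ∘L W) * AWce) y := fun y => rfl
  -- e4 : WAce = WAd ∘ P pointwise
  have e4 : ∀ x, WAce x = WAd ((W ∘L A ∘L W ∘L Ace) x) := by
    intro x
    have hmem : WAce x - WAd ((W ∘L A ∘L W ∘L Ace) x) ∈ LinearMap.range (WAd : X →ₗ[ℂ] X) := by
      apply Submodule.sub_mem
      · exact hWAceR ⟨x, rfl⟩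
      · exact ⟨_, rfl⟩
    have h0 : (W ∘L A) (WAce x - WAd ((W ∘L A ∘L W ∘L Ace) x)) = 0 := by
      have t1 : (W ∘L A) (WAce x) = (W ∘L A ∘L W ∘L Ace) x := by
        simpa [comp_apply] using e2L x
      have t2 : (W ∘L A) (WAd ((W ∘L A ∘L W ∘L Ace) x)) = (W ∘L A ∘L W ∘L Ace) x := by
        obtain ⟨w, hw⟩ : (W ∘L A ∘L W ∘L Ace) x ∈ LinearMap.range (WAd : X →ₗ[ℂ] X) := by
          rw [← hPrange]; exact ⟨x, rfl⟩
        replace hw : WAd w = (W ∘L A ∘L W ∘L Ace) x := hw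
        rw [← hw]
        simp only [comp_apply]
        rw [pc1]
        exact pb1 w
      rw [map_sub, t1, t2, sub_self]
    exact sub_eq_zero.mp (pt_inj hWAb hmem h0)
  -- g3 : AWce = AWd ∘ Q pointwise
  have g3 : ∀ y, AWce y = AWd (((A ∘L W) * AWce) y) := by
    intro y
    have hmem : AWce y - AWd (((A ∘L W) * AWce) y) ∈ LinearMap.range (AWd : Y →ₗ[ℂ] Y) := by
      apply Submodule.sub_mem
      · exact hAWceR ⟨y, rfl⟩
      · exact ⟨_, rfl⟩
    have h0 : (A ∘L W) (AWce y - AWd (((A ∘L W) * AWce) y)) = 0 := by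
      have t1 : (A ∘L W) (AWce y) = ((A ∘L W) * AWce) y := by
        simpa [comp_apply, mul_apply] using g1 y
      have t2 : (A ∘L W) (AWd (((A ∘L W) * AWce) y)) = ((A ∘L W) * AWce) y := by
        obtain ⟨w, hw⟩ : ((A ∘L W) * AWce) y ∈ LinearMap.range (AWd : Y →ₗ[ℂ] Y) := by
          rw [← hQrange]; exact ⟨y, rfl⟩
        replace hw : AWd w = ((A ∘L W) * AWce) y := hw
        rw [← hw]
        simp only [comp_apply]
        rw [pc2]
        exact pb2 w
      rw [map_sub, t1, t2, sub_self]
    exact sub_eq_zero.mp (pt_inj hAWb hmem h0)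
  -- the two composite facts
  have g4 : ∀ y, A (W (AWd (AWd y))) = AWd y := fun y => by rw [pc2, pb2]
  have g6 : ∀ x, W (A (WAd (WAd x))) = WAd x := fun x => by rw [pc1, pb1]
  -- main chains
  have hL : ∀ v, W (A (W (Ace (W (Ace (W (A v))))))) = WAd ((W ∘L A ∘L W ∘L Ace) (W (A v))) := by
    intro v
    rw [e1, e1, e2L, e3, e4]
  have hR : ∀ v, W (A (W (AWce (AWce (A (W (A (WAce (WAce (W (A v))))))))))) =
      WAd ((W ∘L A ∘L W ∘L Ace) (W (A v))) := by
    intro v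
    rw [g1, g2, g3, e4, e4, e5, b1, b1, g4, g5, ← b1, ← b1, g6]
  -- final assembly
  rw [hAot, hAWot, hWAot]
  ext v
  simp only [comp_apply, mul_apply]
  set xx := Ace (W (Ace (W (A v)))) with hxx
  set yy := AWce (AWce (A (W (A (WAce (WAce (W (A v)))))))) with hyy
  have hsub : xx - yy ∈ LinearMap.range (AWd : Y →ₗ[ℂ] Y) := by
    apply Submodule.sub_mem
    · rw [hxx]; exact hAceR ⟨_, rfl⟩
    · rw [hyy]; exact hAWceR ⟨_, rfl⟩
  have hz0 : W (A (W (xx - yy))) = 0 := by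
    simp only [map_sub]
    rw [hxx, hyy, hL v, hR v, sub_self]
  have humem : (A ∘L W) (xx - yy) ∈ LinearMap.range (AWd : Y →ₗ[ℂ] Y) := by
    obtain ⟨w, hw⟩ := hsub
    replace hw : AWd w = xx - yy := hw
    rw [← hw]
    have hcw : (A ∘L W) (AWd w) = AWd ((A ∘L W) w) := by
      have := ContinuousLinearMap.ext_iff.mp hAWc w
      simpa [mul_apply] using this
    rw [hcw]
    exact ⟨_, rfl⟩
  have hu0 : (A ∘L W) ((A ∘L W) (xx - yy)) = 0 := by
    simp only [comp_apply]
    rw [hz0]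
    simp
  have hu : (A ∘L W) (xx - yy) = 0 := pt_inj hAWb humem hu0
  exact sub_eq_zero.mp (pt_inj hAWb hsub hu)

end AuxStmt16
end
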